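/- If u ~ N(0, I_p), then P(‖u‖₂² > p(1 + √(log n / p))²) ≤ 1/√n for every n ≥ 2, i.e. with probability at least 1 − 1/√n, ‖u‖₂² ≤ p(1+√(log n / p))². -/
import Mathlib
open MeasureTheory ProbabilityTheory Matrix Real
open scoped ENNReal NNReal

lemma pdf_mul_exp (l x : ℝ) :
    gaussianPDFReal 0 1 x * rexp (l * x ^ 2)
      = (Real.sqrt (2 * π))⁻¹ * rexp (-(1/2 - l) * x ^ 2) := by
  rw [gaussianPDFReal]
  simp only [NNReal.coe_one, mul_one, sub_zero]
  rw [mul_assoc, ← Real.exp_add]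
  ring_nf

lemma integrable_exp_sq_gauss {l : ℝ} (hl : l < 1/2) :
    Integrable (fun x : ℝ => rexp (l * x ^ 2)) (gaussianReal 0 1) := by
  rw [gaussianReal_of_var_ne_zero 0 one_ne_zero]
  have hmeas : Measurable fun x : ℝ => (gaussianPDFReal 0 1 x).toNNReal :=
    (measurable_gaussianPDFReal 0 1).real_toNNReal
  rw [show gaussianPDF 0 1 = fun x => ((gaussianPDFReal 0 1 x).toNNReal : ℝ≥0∞) from rfl,
    integrable_withDensity_iff_integrable_smul hmeas]
  have : (fun x : ℝ => ((gaussianPDFReal 0 1 x).toNNReal : ℝ≥0) • rexp (l * x ^ 2))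
      = fun x => (Real.sqrt (2 * π))⁻¹ * rexp (-(1/2 - l) * x ^ 2) := by
    funext x
    rw [NNReal.smul_def, smul_eq_mul, Real.coe_toNNReal _ (gaussianPDFReal_nonneg 0 1 x),
      pdf_mul_exp]
  rw [this]
  exact (integrable_exp_neg_mul_sq (by linarith)).const_mul _

lemma integral_exp_sq_gauss {l : ℝ} (hl : l < 1/2) :
    ∫ x : ℝ, rexp (l * x ^ 2) ∂(gaussianReal 0 1) = (Real.sqrt (1 - 2 * l))⁻¹ := by
  rw [gaussianReal_of_var_ne_zero 0 one_ne_zero]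
  have hmeas : Measurable fun x : ℝ => (gaussianPDFReal 0 1 x).toNNReal :=
    (measurable_gaussianPDFReal 0 1).real_toNNReal
  rw [show gaussianPDF 0 1 = fun x => ((gaussianPDFReal 0 1 x).toNNReal : ℝ≥0∞) from rfl,
    integral_withDensity_eq_integral_smul hmeas]
  have h1 : (fun x : ℝ => ((gaussianPDFReal 0 1 x).toNNReal : ℝ≥0) • rexp (l * x ^ 2))
      = fun x => (Real.sqrt (2 * π))⁻¹ * rexp (-(1/2 - l) * x ^ 2) := by
    funext x
    rw [NNReal.smul_def, smul_eq_mul, Real.coe_toNNReal _ (gaussianPDFReal_nonneg 0 1 x),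
      pdf_mul_exp]
  rw [h1, integral_const_mul, integral_gaussian]
  have h2 : (0:ℝ) < 1/2 - l := by linarith
  have h3 : π / (1/2 - l) = 2 * π / (1 - 2 * l) := by
    rw [div_eq_div_iff (by linarith) (by linarith)]; ring
  rw [h3, Real.sqrt_div (by positivity : (0:ℝ) ≤ 2 * π)]
  have h4 : Real.sqrt (2 * π) ≠ 0 := by positivity
  field_simp


lemma integrable_pi_prod {n : ℕ} (μ : Measure ℝ) [SigmaFinite μ] {f : ℝ → ℝ}
    (hf : Integrable f μ) :
    Integrable (fun x : Fin n → ℝ => ∏ i, f (x i)) (Measure.pi fun _ => μ) := by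
  induction n with
  | zero =>
      simp only [Finset.univ_eq_empty, Finset.prod_empty]
      have : IsFiniteMeasure (Measure.pi fun _ : Fin 0 => μ) := by
        rw [Measure.pi_of_empty]; infer_instance
      exact integrable_const _
  | succ n ih =>
      have h := ((measurePreserving_piFinSuccAbove (fun _ : Fin (n+1) => μ) 0).symm)
      rw [← h.integrable_comp_emb (MeasurableEquiv.measurableEmbedding _)]
      simp_rw [MeasurableEquiv.piFinSuccAbove_symm_apply, Fin.insertNthEquiv,
        Fin.prod_univ_succ, Fin.insertNth_zero]
      simp only [Fin.zero_succAbove, Function.comp_def, Fin.cons_zero, Fin.cons_succ,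
        Equiv.coe_fn_mk]
      exact Integrable.mul_prod hf ih

lemma integral_pi_prod {n : ℕ} (μ : Measure ℝ) [SigmaFinite μ] (f : ℝ → ℝ) :
    ∫ x : Fin n → ℝ, ∏ i, f (x i) ∂(Measure.pi fun _ => μ) = (∫ x, f x ∂μ) ^ n := by
  induction n with
  | zero =>
      rw [Measure.pi_of_empty]
      simp
  | succ n ih =>
      calc
        _ = ∫ x : ℝ × (Fin n → ℝ), f x.1 * ∏ i : Fin n, f (x.2 i)
            ∂(μ.prod (Measure.pi fun _ => μ)) := by
          rw [← ((measurePreserving_piFinSuccAbove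
            (fun _ : Fin (n+1) => μ) 0).symm).integral_comp']
          simp only [MeasurableEquiv.piFinSuccAbove_symm_apply, Fin.insertNthEquiv,
            Fin.insertNth_zero, Equiv.coe_fn_mk, Fin.zero_succAbove, Fin.prod_univ_succ,
            Fin.cons_zero, Fin.cons_succ, cast_eq]
        _ = (∫ x, f x ∂μ) * ∫ x : Fin n → ℝ, ∏ i, f (x i) ∂(Measure.pi fun _ => μ) :=
          integral_prod_mul f (fun x : Fin n → ℝ => ∏ i, f (x i))
        _ = _ := by rw [ih, pow_succ]; ring


section main

variable {p : ℕ}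

lemma exp_dot_eq (l : ℝ) (u : Fin p → ℝ) :
    rexp (l * (u ⬝ᵥ u)) = ∏ i, rexp (l * (u i) ^ 2) := by
  rw [dotProduct, Finset.mul_sum, Real.exp_sum]
  congr 1 with i
  ring_nf

lemma chi_part1 (p : ℕ) (hp : 0 < p) (t : ℝ) (ht : 0 < t) :
    (Measure.pi fun _ : Fin p => gaussianReal 0 1)
        {u | (p : ℝ) + 2 * Real.sqrt (p * t) + 2 * t ≤ u ⬝ᵥ u}
      ≤ ENNReal.ofReal (Real.exp (-t)) := by
  set P : Measure (Fin p → ℝ) := Measure.pi fun _ : Fin p => gaussianReal 0 1 with hP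
  have : IsProbabilityMeasure P := by rw [hP]; infer_instance
  set s : ℝ := Real.sqrt (t / p) with hs_def
  have hp' : (0:ℝ) < p := by exact_mod_cast hp
  have hs : 0 < s := Real.sqrt_pos.2 (by positivity)
  set c : ℝ := 1 + 2 * s + 2 * s ^ 2 with hc_def
  have hc : 0 < c := by positivity
  set l : ℝ := (s + s ^ 2) / c with hl_def
  have hl0 : 0 ≤ l := by positivity
  have hl : l < 1 / 2 := by
    rw [hl_def, div_lt_iff₀ hc]
    nlinarith
  have h1 : 1 - 2 * l = c⁻¹ := by
    rw [hl_def]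
    field_simp
    ring
  have hts : t = p * s ^ 2 := by
    rw [hs_def, Real.sq_sqrt (by positivity), mul_div_cancel₀ _ hp'.ne']
  have hsqrt : Real.sqrt (p * t) = p * s := by
    rw [hts, show (p:ℝ) * (p * s ^ 2) = (p * s) ^ 2 by ring,
      Real.sqrt_sq (by positivity)]
  have ha : (p : ℝ) + 2 * Real.sqrt (p * t) + 2 * t = p * c := by
    rw [hsqrt, hts, hc_def]; ring
  -- integrability
  have hint1 : Integrable (fun x : ℝ => rexp (l * x ^ 2)) (gaussianReal 0 1) :=
    integrable_exp_sq_gauss hl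
  have hint : Integrable (fun u : Fin p → ℝ => rexp (l * (u ⬝ᵥ u))) P := by
    have := integrable_pi_prod (n := p) (gaussianReal 0 1) hint1
    rw [hP]
    refine this.congr ?_
    filter_upwards with u
    rw [exp_dot_eq]
  -- Chernoff
  have hcher := measure_ge_le_exp_mul_mgf (X := fun u : Fin p → ℝ => u ⬝ᵥ u) (μ := P)
    ((p : ℝ) + 2 * Real.sqrt (p * t) + 2 * t) hl0 hint
  -- compute mgf
  have hmgf : mgf (fun u : Fin p → ℝ => u ⬝ᵥ u) P l = (Real.sqrt c) ^ p := by
    rw [mgf]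
    have : ∀ u : Fin p → ℝ, rexp (l * (u ⬝ᵥ u)) = ∏ i, rexp (l * (u i) ^ 2) :=
      exp_dot_eq l
    calc ∫ u, rexp (l * (u ⬝ᵥ u)) ∂P = ∫ u : Fin p → ℝ, ∏ i, rexp (l * (u i) ^ 2) ∂P := by
          exact integral_congr_ae (by filter_upwards with u using this u)
      _ = (∫ x : ℝ, rexp (l * x ^ 2) ∂(gaussianReal 0 1)) ^ p := by
          rw [hP]; exact integral_pi_prod (n := p) (gaussianReal 0 1) (fun x => rexp (l * x ^ 2))
      _ = ((Real.sqrt (1 - 2 * l))⁻¹) ^ p := by rw [integral_exp_sq_gauss hl]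
      _ = (Real.sqrt c) ^ p := by rw [h1, Real.sqrt_inv, inv_inv]
  -- bound the RHS
  have hcexp : c ≤ rexp (2 * s) := by
    have := Real.sum_le_exp_of_nonneg (by positivity : (0:ℝ) ≤ 2 * s) 3
    calc c = ∑ i ∈ Finset.range 3, (2 * s) ^ i / (Nat.factorial i) := by
          simp [Finset.sum_range_succ, Nat.factorial]
          ring
      _ ≤ rexp (2 * s) := this
  have hsc : Real.sqrt c ≤ rexp s := by
    calc Real.sqrt c ≤ Real.sqrt (rexp (2 * s)) := Real.sqrt_le_sqrt hcexp
      _ = rexp s := by rw [← Real.exp_half]; norm_num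
  have hscp : (Real.sqrt c) ^ p ≤ rexp (p * s) := by
    calc (Real.sqrt c) ^ p ≤ (rexp s) ^ p := by
          exact pow_le_pow_left₀ (Real.sqrt_nonneg _) hsc p
      _ = rexp (p * s) := by rw [← Real.exp_nat_mul]
  have hla : l * ((p : ℝ) + 2 * Real.sqrt (p * t) + 2 * t) = p * (s + s ^ 2) := by
    rw [ha, hl_def]
    field_simp
  have hfinal : rexp (-l * ((p : ℝ) + 2 * Real.sqrt (p * t) + 2 * t))
      * mgf (fun u : Fin p → ℝ => u ⬝ᵥ u) P l ≤ rexp (-t) := by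
    rw [hmgf]
    calc rexp (-l * ((p : ℝ) + 2 * Real.sqrt (p * t) + 2 * t)) * (Real.sqrt c) ^ p
        ≤ rexp (-l * ((p : ℝ) + 2 * Real.sqrt (p * t) + 2 * t)) * rexp (p * s) := by
          exact mul_le_mul_of_nonneg_left hscp (Real.exp_nonneg _)
      _ = rexp (-l * ((p : ℝ) + 2 * Real.sqrt (p * t) + 2 * t) + p * s) := by
          rw [← Real.exp_add]
      _ = rexp (-t) := by
          congr 1
          rw [neg_mul, hla, hts]
          ring
  calc P {u | (p : ℝ) + 2 * Real.sqrt (p * t) + 2 * t ≤ u ⬝ᵥ u}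
      = ENNReal.ofReal (P {u | (p : ℝ) + 2 * Real.sqrt (p * t) + 2 * t ≤ u ⬝ᵥ u}).toReal := by
        rw [ENNReal.ofReal_toReal (measure_ne_top _ _)]
    _ ≤ ENNReal.ofReal (rexp (-t)) := ENNReal.ofReal_le_ofReal (hcher.trans hfinal)

end main

theorem chi_part2 (p : ℕ) (hp : 0 < p) :
    (∀ n : ℕ, 2 ≤ n →
      (Measure.pi fun _ : Fin p => gaussianReal 0 1)
          {u | (p : ℝ) * (1 + Real.sqrt (Real.log n / p)) ^ 2 < u ⬝ᵥ u}
        ≤ ENNReal.ofReal (1 / Real.sqrt n)) := by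
  intro n hn
  have hp' : (0:ℝ) < p := by exact_mod_cast hp
  have hn1 : (1:ℝ) < n := by exact_mod_cast lt_of_lt_of_le one_lt_two hn
  have hn0 : (0:ℝ) < n := by linarith
  have hlog : 0 < Real.log n := Real.log_pos hn1
  set t : ℝ := Real.log n / 2 with ht_def
  have ht : 0 < t := by positivity
  have h2t : Real.log n = 2 * t := by rw [ht_def]; ring
  have hsub : {u : Fin p → ℝ | (p : ℝ) * (1 + Real.sqrt (Real.log n / p)) ^ 2 < u ⬝ᵥ u}
      ⊆ {u : Fin p → ℝ | (p : ℝ) + 2 * Real.sqrt (p * t) + 2 * t ≤ u ⬝ᵥ u} := by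
    intro u hu
    simp only [Set.mem_setOf_eq] at hu ⊢
    have hr : (p:ℝ) * Real.sqrt (Real.log n / p) = Real.sqrt (p * Real.log n) := by
      rw [show (p:ℝ) * Real.sqrt (Real.log n / p)
          = Real.sqrt ((p:ℝ)^2) * Real.sqrt (Real.log n / p) by
            rw [Real.sqrt_sq hp'.le],
        ← Real.sqrt_mul (by positivity)]
      congr 1
      field_simp
    have hrsq : (p:ℝ) * (Real.sqrt (Real.log n / p)) ^ 2 = Real.log n := by
      rw [Real.sq_sqrt (by positivity), mul_div_cancel₀ _ hp'.ne']
    have hexp : (p : ℝ) * (1 + Real.sqrt (Real.log n / p)) ^ 2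
        = p + 2 * Real.sqrt (p * Real.log n) + Real.log n := by
      have : (p : ℝ) * (1 + Real.sqrt (Real.log n / p)) ^ 2
          = p + 2 * ((p:ℝ) * Real.sqrt (Real.log n / p))
            + (p:ℝ) * (Real.sqrt (Real.log n / p)) ^ 2 := by ring
      rw [this, hr, hrsq]
    have hmono : Real.sqrt (p * t) ≤ Real.sqrt (p * Real.log n) := by
      apply Real.sqrt_le_sqrt
      rw [h2t]
      nlinarith
    have key : (p : ℝ) + 2 * Real.sqrt (p * t) + 2 * t
        ≤ (p : ℝ) * (1 + Real.sqrt (Real.log n / p)) ^ 2 := by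
      rw [hexp]
      linarith [hmono, h2t]
    linarith [hu, key]
  calc (Measure.pi fun _ : Fin p => gaussianReal 0 1)
        {u | (p : ℝ) * (1 + Real.sqrt (Real.log n / p)) ^ 2 < u ⬝ᵥ u}
      ≤ (Measure.pi fun _ : Fin p => gaussianReal 0 1)
        {u | (p : ℝ) + 2 * Real.sqrt (p * t) + 2 * t ≤ u ⬝ᵥ u} := measure_mono hsub
    _ ≤ ENNReal.ofReal (Real.exp (-t)) := chi_part1 p hp t ht
    _ = ENNReal.ofReal (1 / Real.sqrt n) := by
        congr 1
        rw [ht_def, Real.exp_neg, Real.exp_half, Real.exp_log hn0, one_div]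


/-- Laurent–Massart tail bound for `‖u‖₂²` with `u ~ N(0, I_p)`:
`P(‖u‖₂² ≥ p + 2√(pt) + 2t) ≤ e^{−t}` for all `t > 0`; consequently, for every `n ≥ 2`,
`P(‖u‖₂² > p(1 + √(log n / p))²) ≤ 1/√n`. -/
theorem chi_squared_tail_bound (p : ℕ) (hp : 0 < p) :
    (∀ t : ℝ, 0 < t →
      (Measure.pi fun _ : Fin p => gaussianReal 0 1)
          {u | (p : ℝ) + 2 * Real.sqrt (p * t) + 2 * t ≤ u ⬝ᵥ u}
        ≤ ENNReal.ofReal (Real.exp (-t))) ∧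
    (∀ n : ℕ, 2 ≤ n →
      (Measure.pi fun _ : Fin p => gaussianReal 0 1)
          {u | (p : ℝ) * (1 + Real.sqrt (Real.log n / p)) ^ 2 < u ⬝ᵥ u}
        ≤ ENNReal.ofReal (1 / Real.sqrt n)) :=
  ⟨fun t ht => chi_part1 p hp t ht, chi_part2 p hp⟩
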